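/- arXiv:1912.01817 — 5 statements merged into one kernel-verified Lean document; each statement's English description precedes it below -/
import Mathlib

section
/- If T(x,y) = (b²−λ(x,y))·x / ((a²−λ(x,y))·y) where λ(x,y) is determined by x²/(a²−λ) + y²/(b²−λ) = 1, then T satisfies T_x·xy·(T²+1) = T(y + 2xT − yT²) at every point where the implicit function λ is smooth and x, y ≠ 0. -/
/-- Partial derivative in the `x` direction. -/
noncomputable def pdx (f : ℝ × ℝ → ℝ) (p : ℝ × ℝ) : ℝ := fderiv ℝ f p (1, 0)

/-- If `T = x(b²−λ)/(y(a²−λ))` where `λ(x,y)` is a smooth solution of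
`x²/(a²−λ) + y²/(b²−λ) = 1` with `a² > b²`, `a²−λ > 0`, `b²−λ ≠ 0`, then
`T_x · xy · (T²+1) = T(y + 2xT − yT²)` wherever `x, y ≠ 0`. -/
theorem confocal_slope_Tx (a b : ℝ) (hab : b ^ 2 < a ^ 2)
    (U : Set (ℝ × ℝ)) (hU : IsOpen U)
    (lam T : ℝ × ℝ → ℝ) (hlam : ContDiffOn ℝ (⊤ : ℕ∞) lam U)
    (hx : ∀ p ∈ U, p.1 ≠ 0) (hy : ∀ p ∈ U, p.2 ≠ 0)
    (hda : ∀ p ∈ U, 0 < a ^ 2 - lam p) (hdb : ∀ p ∈ U, b ^ 2 - lam p ≠ 0)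
    (hinc : ∀ p ∈ U, p.1 ^ 2 / (a ^ 2 - lam p) + p.2 ^ 2 / (b ^ 2 - lam p) = 1)
    (hT : ∀ p ∈ U, T p = p.1 * (b ^ 2 - lam p) / (p.2 * (a ^ 2 - lam p))) :
    ∀ p ∈ U,
      pdx T p * (p.1 * p.2 * ((T p) ^ 2 + 1))
        = T p * (p.2 + 2 * p.1 * T p - p.2 * (T p) ^ 2) := by
  rintro ⟨x, y⟩ hp
  have hx' : x ≠ 0 := hx _ hp
  have hy' : y ≠ 0 := hy _ hp
  set A : ℝ := a ^ 2 - lam (x, y) with hA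
  set B : ℝ := b ^ 2 - lam (x, y) with hB
  have hA0 : 0 < A := hda _ hp
  have hAne : A ≠ 0 := ne_of_gt hA0
  have hBne : B ≠ 0 := hdb _ hp
  set m : ℝ := fderiv ℝ lam (x, y) (1, 0) with hm
  -- differentiability of lam at the point
  have hd : DifferentiableAt ℝ lam (x, y) :=
    (hlam.differentiableOn (by simp)).differentiableAt (hU.mem_nhds hp)
  -- the horizontal line through (x,y)
  have hline : HasDerivAt (fun t : ℝ => ((x + t : ℝ), y)) ((1 : ℝ), (0 : ℝ)) 0 :=
    ((hasDerivAt_id 0).const_add x).prodMk (hasDerivAt_const 0 y)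
  have h00 : ((fun t : ℝ => ((x + t : ℝ), y)) 0) = (x, y) := by simp
  have hd' : HasFDerivAt lam (fderiv ℝ lam (x, y)) ((fun t : ℝ => ((x + t : ℝ), y)) 0) := by
    rw [h00]; exact hd.hasFDerivAt
  have hl : HasDerivAt (fun t : ℝ => lam (x + t, y)) m 0 :=
    hd'.comp_hasDerivAt 0 hline
  -- eventually on the line we stay in U
  have hUt : ∀ᶠ t in nhds (0 : ℝ), ((x + t : ℝ), y) ∈ U := by
    have hcont : Continuous fun t : ℝ => ((x + t : ℝ), y) := by fun_prop
    have := hcont.continuousAt (x := (0 : ℝ))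
    have hmem : U ∈ nhds ((fun t : ℝ => ((x + t : ℝ), y)) 0) := by
      rw [h00]; exact hU.mem_nhds hp
    exact this.eventually_mem hmem
  -- cleared incidence relation
  have hE1 : x ^ 2 * B + y ^ 2 * A = A * B := by
    have h := hinc _ hp
    rw [div_add_div _ _ hAne hBne, div_eq_one_iff_eq (mul_ne_zero hAne hBne)] at h
    linear_combination h
  -- key consequence
  have hkey : x ^ 2 * B ^ 2 + y ^ 2 * A ^ 2 = A * B * (A + B - x ^ 2 - y ^ 2) := by
    linear_combination (A + B) * hE1
  have hx2 : (0 : ℝ) < x ^ 2 := lt_of_le_of_ne (sq_nonneg x) (Ne.symm (pow_ne_zero 2 hx'))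
  have hB2 : (0 : ℝ) < B ^ 2 := lt_of_le_of_ne (sq_nonneg B) (Ne.symm (pow_ne_zero 2 hBne))
  have hpos : 0 < x ^ 2 * B ^ 2 + y ^ 2 * A ^ 2 := by nlinarith [sq_nonneg y, sq_nonneg A]
  have hDne : A + B - x ^ 2 - y ^ 2 ≠ 0 := by
    intro h
    rw [h, mul_zero] at hkey
    exact absurd hkey (ne_of_gt hpos)
  -- differentiate the incidence relation along the line
  have hfD : HasDerivAt
      (fun t : ℝ => (x + t) ^ 2 / (a ^ 2 - lam (x + t, y)) + y ^ 2 / (b ^ 2 - lam (x + t, y)))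
      ((2 * (x + 0) ^ 1 * 1 * (a ^ 2 - lam (x + 0, y)) - (x + 0) ^ 2 * (0 - m)) /
          (a ^ 2 - lam (x + 0, y)) ^ 2 +
        (0 * (b ^ 2 - lam (x + 0, y)) - y ^ 2 * (0 - m)) / (b ^ 2 - lam (x + 0, y)) ^ 2) 0 := by
    have hnum : HasDerivAt (fun t : ℝ => (x + t : ℝ) ^ 2) (2 * (x + 0) ^ 1 * 1) 0 :=
      ((hasDerivAt_id 0).const_add x).pow 2
    have hden1 : HasDerivAt (fun t : ℝ => a ^ 2 - lam (x + t, y)) (0 - m) 0 :=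
      (hasDerivAt_const 0 (a ^ 2)).sub hl
    have hden2 : HasDerivAt (fun t : ℝ => b ^ 2 - lam (x + t, y)) (0 - m) 0 :=
      (hasDerivAt_const 0 (b ^ 2)).sub hl
    have hA0' : a ^ 2 - lam (x + 0, y) ≠ 0 := by
      simpa using hAne
    have hB0' : b ^ 2 - lam (x + 0, y) ≠ 0 := by
      simpa using hBne
    exact (hnum.div hden1 hA0').add ((hasDerivAt_const 0 (y ^ 2)).div hden2 hB0')
  have hfc : HasDerivAt
      (fun t : ℝ => (x + t) ^ 2 / (a ^ 2 - lam (x + t, y)) + y ^ 2 / (b ^ 2 - lam (x + t, y)))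
      0 0 := by
    apply (hasDerivAt_const (0 : ℝ) (1 : ℝ)).congr_of_eventuallyEq
    filter_upwards [hUt] with t ht
    exact hinc _ ht
  have hAne' : a ^ 2 - lam (x, y) ≠ 0 := hA ▸ hAne
  have hBne' : b ^ 2 - lam (x, y) ≠ 0 := hB ▸ hBne
  have hval2 : (2 * x * A + x ^ 2 * m) * B ^ 2 + y ^ 2 * m * A ^ 2 = 0 := by
    have e1 := hfD.unique hfc
    simp only [add_zero] at e1
    rw [hA, hB]
    have h2 : ((2 * x ^ 1 * 1 * (a ^ 2 - lam (x, y)) - x ^ 2 * (0 - m)) /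
          (a ^ 2 - lam (x, y)) ^ 2 +
        (0 * (b ^ 2 - lam (x, y)) - y ^ 2 * (0 - m)) / (b ^ 2 - lam (x, y)) ^ 2) *
          ((a ^ 2 - lam (x, y)) ^ 2 * (b ^ 2 - lam (x, y)) ^ 2) =
        (2 * x * (a ^ 2 - lam (x, y)) + x ^ 2 * m) * (b ^ 2 - lam (x, y)) ^ 2 +
          y ^ 2 * m * (a ^ 2 - lam (x, y)) ^ 2 := by
      field_simp
      ring
    rw [e1, zero_mul] at h2
    linarith [h2]
  -- solve for m
  have hmD : m * (A + B - x ^ 2 - y ^ 2) = -(2 * x * B) := by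
    have hABne : A * B ≠ 0 := mul_ne_zero hAne hBne
    apply mul_left_cancel₀ hABne
    calc A * B * (m * (A + B - x ^ 2 - y ^ 2)) = m * (A * B * (A + B - x ^ 2 - y ^ 2)) := by ring
    _ = m * (x ^ 2 * B ^ 2 + y ^ 2 * A ^ 2) := by rw [hkey]
    _ = ((2 * x * A + x ^ 2 * m) * B ^ 2 + y ^ 2 * m * A ^ 2) - 2 * x * A * B ^ 2 := by ring
    _ = A * B * -(2 * x * B) := by rw [hval2]; ring
  have hmv : m = -(2 * x * B) / (A + B - x ^ 2 - y ^ 2) := by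
    field_simp
    linarith [hmD]
  -- the explicit formula function G
  have hGdiff : DifferentiableAt ℝ
      (fun q : ℝ × ℝ => q.1 * (b ^ 2 - lam q) / (q.2 * (a ^ 2 - lam q))) (x, y) := by
    simp only [div_eq_mul_inv]
    exact (differentiableAt_fst.mul ((differentiableAt_const _).sub hd)).mul
      ((differentiableAt_snd.mul ((differentiableAt_const _).sub hd)).inv
        (mul_ne_zero hy' (show ((fun _ : ℝ × ℝ => a ^ 2) - lam) (x, y) ≠ 0 from hAne)))
  have hTG : T =ᶠ[nhds ((x, y) : ℝ × ℝ)] (fun q : ℝ × ℝ => q.1 * (b ^ 2 - lam q) / (q.2 * (a ^ 2 - lam q))) := by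
    filter_upwards [hU.mem_nhds hp] with q hq
    rw [hT _ hq]
  have hfd : fderiv ℝ T (x, y) = fderiv ℝ (fun q : ℝ × ℝ => q.1 * (b ^ 2 - lam q) / (q.2 * (a ^ 2 - lam q))) (x, y) := hTG.fderiv_eq
  -- derivative of G along the line, two ways
  have hGd' : HasFDerivAt (fun q : ℝ × ℝ => q.1 * (b ^ 2 - lam q) / (q.2 * (a ^ 2 - lam q))) (fderiv ℝ (fun q : ℝ × ℝ => q.1 * (b ^ 2 - lam q) / (q.2 * (a ^ 2 - lam q))) (x, y)) ((fun t : ℝ => ((x + t : ℝ), y)) 0) := by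
    rw [h00]; exact hGdiff.hasFDerivAt
  have hGl : HasDerivAt (fun t : ℝ => (fun q : ℝ × ℝ => q.1 * (b ^ 2 - lam q) / (q.2 * (a ^ 2 - lam q))) (x + t, y)) (fderiv ℝ (fun q : ℝ × ℝ => q.1 * (b ^ 2 - lam q) / (q.2 * (a ^ 2 - lam q))) (x, y) (1, 0)) 0 :=
    hGd'.comp_hasDerivAt (l := fun q : ℝ × ℝ => q.1 * (b ^ 2 - lam q) / (q.2 * (a ^ 2 - lam q))) 0 hline
  have hGl2 : HasDerivAt (fun t : ℝ => (fun q : ℝ × ℝ => q.1 * (b ^ 2 - lam q) / (q.2 * (a ^ 2 - lam q))) (x + t, y))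
      (((1 * (b ^ 2 - lam (x + 0, y)) + (x + 0) * (0 - m)) * (y * (a ^ 2 - lam (x + 0, y))) -
          (x + 0) * (b ^ 2 - lam (x + 0, y)) * (0 * (a ^ 2 - lam (x + 0, y)) + y * (0 - m))) /
        (y * (a ^ 2 - lam (x + 0, y))) ^ 2) 0 := by
    have hden1 : HasDerivAt (fun t : ℝ => b ^ 2 - lam (x + t, y)) (0 - m) 0 :=
      (hasDerivAt_const 0 (b ^ 2)).sub hl
    have hden2 : HasDerivAt (fun t : ℝ => a ^ 2 - lam (x + t, y)) (0 - m) 0 :=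
      (hasDerivAt_const 0 (a ^ 2)).sub hl
    have hxt : HasDerivAt (fun t : ℝ => (x + t : ℝ)) 1 0 := (hasDerivAt_id 0).const_add x
    have hnum : HasDerivAt (fun t : ℝ => (x + t) * (b ^ 2 - lam (x + t, y)))
        (1 * (b ^ 2 - lam (x + 0, y)) + (x + 0) * (0 - m)) 0 := hxt.mul hden1
    have hden : HasDerivAt (fun t : ℝ => y * (a ^ 2 - lam (x + t, y)))
        (0 * (a ^ 2 - lam (x + 0, y)) + y * (0 - m)) 0 :=
      (hasDerivAt_const 0 y).mul hden2
    have hne : y * (a ^ 2 - lam (x + 0, y)) ≠ 0 := by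
      simpa using mul_ne_zero hy' hAne
    exact hnum.div hden hne
  have hTx : pdx T (x, y) = (A * B - x * m * (A - B)) / (y * A ^ 2) := by
    have h1 : fderiv ℝ (fun q : ℝ × ℝ => q.1 * (b ^ 2 - lam q) / (q.2 * (a ^ 2 - lam q))) (x, y) (1, 0) =
        ((1 * (b ^ 2 - lam (x + 0, y)) + (x + 0) * (0 - m)) * (y * (a ^ 2 - lam (x + 0, y))) -
          (x + 0) * (b ^ 2 - lam (x + 0, y)) * (0 * (a ^ 2 - lam (x + 0, y)) + y * (0 - m))) /
        (y * (a ^ 2 - lam (x + 0, y))) ^ 2 := hGl.unique hGl2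
    simp only [pdx]
    rw [hfd, h1]
    simp only [add_zero]
    rw [← hA, ← hB]
    rw [div_eq_div_iff (by positivity) (by exact mul_ne_zero hy' (pow_ne_zero 2 hAne))]
    ring
  have hTv : T (x, y) = x * B / (y * A) := hT _ hp
  rw [hTx, hTv, hmv]
  clear_value A B m
  field_simp
  ring_nf
  linear_combination (2 * x ^ 2 * (A ^ 2 - B ^ 2)) * hE1
end

section
/- Through every point (x,y) with x ≠ 0 and y ≠ 0 there pass exactly two conics of the confocal family x²/(a²−λ) + y²/(b²−λ) = 1 (a² > b² > 0): the equation x²/(a²−λ) + y²/(b²−λ) = 1 has exactly one solution λ with λ < b² and exactly one solution with b² < λ < a². -/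
/-! Clearing denominators turns `x²/(A−λ) + y²/(B−λ) = 1` (with `A = a²`, `B = b²`) into the
monic quadratic `Q(λ) = (A−λ)(B−λ) − x²(B−λ) − y²(A−λ) = 0`. Since `Q(B) = −y²(A−B) < 0`, the
quadratic has two real roots `r₁ < B < r₂`, and `Q(A) = x²(A−B) > 0` forces `r₂ < A`. -/

lemma div_add_div_eq_one_iff {p q u v : ℝ} (hu : u ≠ 0) (hv : v ≠ 0) :
    p / u + q / v = 1 ↔ u * v - p * v - q * u = 0 := by
  rw [div_add_div _ _ hu hv, div_eq_one_iff_eq (mul_ne_zero hu hv), ← sub_eq_zero]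
  constructor <;> intro h <;> linear_combination -h

lemma exists_roots_of_quadratic_neg {s c t : ℝ} (h : t ^ 2 - s * t + c < 0) :
    ∃ r₁ r₂, r₁ < t ∧ t < r₂ ∧ ∀ l, l ^ 2 - s * l + c = (l - r₁) * (l - r₂) := by
  have hdisc : (2 * t - s) ^ 2 < s ^ 2 - 4 * c := by linarith
  set r := √(s ^ 2 - 4 * c)
  have hr : r ^ 2 = s ^ 2 - 4 * c := Real.sq_sqrt (by nlinarith)
  obtain ⟨hr_lt, hlt_r⟩ := abs_lt.mp (abs_lt_of_sq_lt_sq (hr ▸ hdisc) (Real.sqrt_nonneg _))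
  refine ⟨(s - r) / 2, (s + r) / 2, by linarith, by linarith, fun l => ?_⟩
  linear_combination hr / 4

lemma confocal_roots {A B p q : ℝ} (hp : 0 < p) (hq : 0 < q) (hBA : B < A) :
    ∃ r₁ r₂, r₁ < B ∧ B < r₂ ∧ r₂ < A ∧
      ∀ l, l ≠ A → l ≠ B → (p / (A - l) + q / (B - l) = 1 ↔ l = r₁ ∨ l = r₂) := by
  obtain ⟨r₁, r₂, hr₁, hr₂, hQ⟩ :=
    exists_roots_of_quadratic_neg (s := A + B - p - q) (c := A * B - p * B - q * A) (t := B)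
      (by nlinarith [mul_pos hq (sub_pos.mpr hBA)])
  have hQA : 0 < (A - r₁) * (A - r₂) := by
    rw [← hQ]
    nlinarith [mul_pos hp (sub_pos.mpr hBA)]
  have hr₂A : r₂ < A := by
    have := (pos_iff_pos_of_mul_pos hQA).1 (by linarith)
    linarith
  refine ⟨r₁, r₂, hr₁, hr₂, hr₂A, fun l hlA hlB => ?_⟩
  rw [div_add_div_eq_one_iff (sub_ne_zero.mpr hlA.symm) (sub_ne_zero.mpr hlB.symm),
    show (A - l) * (B - l) - p * (B - l) - q * (A - l) = (l - r₁) * (l - r₂) by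
      linear_combination hQ l, mul_eq_zero, sub_eq_zero, sub_eq_zero]

theorem confocal_two_conics_general (a b x y : ℝ) (hab : b ^ 2 < a ^ 2)
    (hx : x ≠ 0) (hy : y ≠ 0) :
    (∃! l : ℝ, l < b ^ 2 ∧ x ^ 2 / (a ^ 2 - l) + y ^ 2 / (b ^ 2 - l) = 1) ∧
    (∃! l : ℝ, b ^ 2 < l ∧ l < a ^ 2 ∧
      x ^ 2 / (a ^ 2 - l) + y ^ 2 / (b ^ 2 - l) = 1) := by
  obtain ⟨r₁, r₂, hr₁, hr₂, hr₂A, hroots⟩ :=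
    confocal_roots (p := x ^ 2) (q := y ^ 2) (by positivity) (by positivity) hab
  constructor
  · refine ⟨r₁, ⟨hr₁, (hroots r₁ (by linarith) hr₁.ne).2 (.inl rfl)⟩, ?_⟩
    rintro l ⟨hl, h⟩
    rcases (hroots l (by linarith) hl.ne).1 h with rfl | rfl
    · rfl
    · linarith
  · refine ⟨r₂, ⟨hr₂, hr₂A, (hroots r₂ hr₂A.ne hr₂.ne').2 (.inr rfl)⟩, ?_⟩
    rintro l ⟨hl, hlA, h⟩
    rcases (hroots l hlA.ne hl.ne').1 h with rfl | rfl
    · linarith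
    · rfl

/-- Through every point `(x,y)` off the axes there pass exactly two conics of
the confocal family `x²/(a²−λ) + y²/(b²−λ) = 1` (with `a² > b² > 0`): there is
exactly one solution `λ < b²` (an ellipse) and exactly one solution
`b² < λ < a²` (a hyperbola). -/
theorem confocal_two_conics (a b x y : ℝ) (hb : 0 < b ^ 2) (hab : b ^ 2 < a ^ 2)
    (hx : x ≠ 0) (hy : y ≠ 0) :
    (∃! l : ℝ, l < b ^ 2 ∧ x ^ 2 / (a ^ 2 - l) + y ^ 2 / (b ^ 2 - l) = 1) ∧
    (∃! l : ℝ, b ^ 2 < l ∧ l < a ^ 2 ∧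
      x ^ 2 / (a ^ 2 - l) + y ^ 2 / (b ^ 2 - l) = 1) :=
  confocal_two_conics_general a b x y hab hx hy
end

section
/- The slope function T of the confocal family, satisfying T_x = T(y + 2xT − yT²)/(xy(T²+1)) and T_y = T(x − 2yT − xT²)/(xy(T²+1)), also satisfies the conformal flatness equation T_xx + T_yy = 2T(T_x² + T_y²)/(1 + T²). -/
/-- Partial derivative in the `y` direction. -/
noncomputable def pdy (f : ℝ × ℝ → ℝ) (p : ℝ × ℝ) : ℝ := fderiv ℝ f p (0, 1)

/-- The slope function of the confocal family, satisfying
`T_x = T(y + 2xT − yT²)/(xy(T²+1))` and `T_y = T(x − 2yT − xT²)/(xy(T²+1))`,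
also satisfies the conformal flatness (Laplace) equation
`T_xx + T_yy = 2T(T_x² + T_y²)/(1+T²)`. -/
theorem confocal_slope_conformally_flat
    (U : Set (ℝ × ℝ)) (hU : IsOpen U)
    (hx : ∀ p ∈ U, p.1 ≠ 0) (hy : ∀ p ∈ U, p.2 ≠ 0)
    (T : ℝ × ℝ → ℝ) (hT : ContDiffOn ℝ (⊤ : ℕ∞) T U) (hT0 : ∀ p ∈ U, T p ≠ 0)
    (h1 : ∀ p ∈ U, pdx T p
      = T p * (p.2 + 2 * p.1 * T p - p.2 * (T p) ^ 2) / (p.1 * p.2 * ((T p) ^ 2 + 1)))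
    (h2 : ∀ p ∈ U, pdy T p
      = T p * (p.1 - 2 * p.2 * T p - p.1 * (T p) ^ 2) / (p.1 * p.2 * ((T p) ^ 2 + 1))) :
    ∀ p ∈ U, (pdx (pdx T) p + pdy (pdy T) p) * (1 + (T p) ^ 2)
      = 2 * T p * ((pdx T p) ^ 2 + (pdy T p) ^ 2) := by
  intro p hp
  have hT' : HasFDerivAt T (fderiv ℝ T p) p :=
    (((hT.contDiffAt (hU.mem_nhds hp)).differentiableAt (by simp)).hasFDerivAt)
  set φ := fderiv ℝ T p with hφ
  have hne : p.1 * p.2 * ((T p) ^ 2 + 1) ≠ 0 :=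
    mul_ne_zero (mul_ne_zero (hx p hp) (hy p hp)) (by positivity)
  -- the right-hand side functions
  set f : ℝ × ℝ → ℝ := fun q =>
    T q * (q.2 + 2 * q.1 * T q - q.2 * (T q) ^ 2) * (q.1 * q.2 * ((T q) ^ 2 + 1))⁻¹ with hfdef
  set g : ℝ × ℝ → ℝ := fun q =>
    T q * (q.1 - 2 * q.2 * T q - q.1 * (T q) ^ 2) * (q.1 * q.2 * ((T q) ^ 2 + 1))⁻¹ with hgdef
  -- derivatives of f and g at p
  have hfst : HasFDerivAt (fun q : ℝ × ℝ => q.1) (ContinuousLinearMap.fst ℝ ℝ ℝ) p :=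
    hasFDerivAt_fst
  have hsnd : HasFDerivAt (fun q : ℝ × ℝ => q.2) (ContinuousLinearMap.snd ℝ ℝ ℝ) p :=
    hasFDerivAt_snd
  have hpow : HasFDerivAt (fun q : ℝ × ℝ => T q ^ 2) ((2 * T p) • φ) p := by
    have := hT'.mul hT'
    simp only [← pow_two] at this
    refine (this : HasFDerivAt (fun q : ℝ × ℝ => T q ^ 2) _ p).congr_fderiv ?_
    rw [two_mul, add_smul]
  have hnumf := hT'.mul ((hsnd.add ((hfst.const_mul 2).mul hT')).sub (hsnd.mul hpow))
  have hnumg := hT'.mul ((hfst.sub ((hsnd.const_mul 2).mul hT')).sub (hfst.mul hpow))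
  have hden := (hfst.mul hsnd).mul (hpow.add_const 1)
  have hinv : HasFDerivAt (fun q : ℝ × ℝ => (q.1 * q.2 * ((T q) ^ 2 + 1))⁻¹)
      (((ContinuousLinearMap.smulRight (1 : ℝ →L[ℝ] ℝ)
        (-((p.1 * p.2 * ((T p) ^ 2 + 1)) ^ 2)⁻¹))).comp
        ((p.1 * p.2) • (2 * T p) • φ +
          (T p ^ 2 + 1) • (p.1 • ContinuousLinearMap.snd ℝ ℝ ℝ +
            p.2 • ContinuousLinearMap.fst ℝ ℝ ℝ))) p :=
    (hasFDerivAt_inv hne).comp p hden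
  have hfd := hnumf.mul hinv
  have hgd := hnumg.mul hinv
  have hxx : pdx (pdx T) p = fderiv ℝ f p (1, 0) := by
    unfold pdx
    congr 1
    apply Filter.EventuallyEq.fderiv_eq
    filter_upwards [hU.mem_nhds hp] with q hq
    have hq1 := h1 q hq
    simp only [pdx] at hq1
    rw [hq1, div_eq_mul_inv]
  have hyy : pdy (pdy T) p = fderiv ℝ g p (0, 1) := by
    unfold pdy
    congr 1
    apply Filter.EventuallyEq.fderiv_eq
    filter_upwards [hU.mem_nhds hp] with q hq
    have hq2 := h2 q hq
    simp only [pdy] at hq2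
    rw [hq2, div_eq_mul_inv]
  have ha := h1 p hp
  have hb := h2 p hp
  simp only [pdx, pdy] at ha hb
  have hfd' : HasFDerivAt f _ p := hfd
  have hgd' : HasFDerivAt g _ p := hgd
  rw [hxx, hyy, hfd'.fderiv, hgd'.fderiv]
  simp only [pdx, pdy, ContinuousLinearMap.add_apply, ContinuousLinearMap.sub_apply,
    ContinuousLinearMap.smul_apply, ContinuousLinearMap.coe_fst', ContinuousLinearMap.coe_snd', smul_eq_mul,
    ContinuousLinearMap.comp_apply, ContinuousLinearMap.smulRight_apply,
    ContinuousLinearMap.one_apply, mul_zero, mul_one, add_zero, zero_add,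
    Pi.mul_apply, Pi.add_apply, Pi.sub_apply]
  rw [ha, hb]
  have hp1 := hx p hp
  have hp2 := hy p hp
  field_simp
  ring
end

section
/- Let T be the slope function of the confocal conic family with foci (±1,0) and define S = 2T/(1−T²) (where T² ≠ 1). Then S is the slope function of the bipolar coordinate net with the same foci; i.e., the tangent direction of the circles of the elliptic Apollonian pencil through the foci (±1,0) at the point (x,y) annihilates the form S dx + dy, and S = 2T/(1−T²) expresses the doубling-angle relation between the tangent directions of the confocal net and the bipolar net. -/
/-! If the conic through `(x, y)` has slope `-T` with `T = p / q`, `p = x B`, `q = y A`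
(`A = a² − λ`, `B = b² − λ`), then the doubled-angle slope is `2pq / (q² − p²)`.
On the conic, `A − B = 1` turns `q² − p²` into `AB (1 + y² − x²)`, and cancelling `AB`
leaves the slope `2xy / (1 + y² − x²)` of the circle `x² + (y − c)² = 1 + c²`
through `(x, y)`. -/

/-- Also true when `q = 0` or `q² = p²`, where both sides are `0`. -/
theorem two_mul_div_div_one_sub_div_sq {K : Type*} [Field K] (p q : K) :
    2 * (p / q) / (1 - (p / q) ^ 2) = 2 * p * q / (q ^ 2 - p ^ 2) := by
  rcases eq_or_ne q 0 with rfl | hq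
  · simp
  rw [div_pow, one_sub_div (pow_ne_zero 2 hq), div_div_eq_mul_div]
  congr 1
  field_simp

theorem sq_mul_sub_sq_mul_of_confocal {R : Type*} [CommRing R] {A B x y : R}
    (hAB : A - B = 1) (hmem : x ^ 2 * B + y ^ 2 * A = A * B) :
    (y * A) ^ 2 - (x * B) ^ 2 = A * B * (1 + y ^ 2 - x ^ 2) := by
  linear_combination (A * B) * hAB + (A - B) * hmem

theorem bipolar_slope_relation_general (a b lam x y T : ℝ) (hfoci : a ^ 2 - b ^ 2 = 1)
    (hda : a ^ 2 - lam ≠ 0) (hdb : b ^ 2 - lam ≠ 0)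
    (hinc : x ^ 2 / (a ^ 2 - lam) + y ^ 2 / (b ^ 2 - lam) = 1)
    (hT : T = x * (b ^ 2 - lam) / (y * (a ^ 2 - lam))) :
    2 * T / (1 - T ^ 2) = 2 * x * y / (1 + y ^ 2 - x ^ 2) := by
  have hAB : (a ^ 2 - lam) - (b ^ 2 - lam) = 1 := by linear_combination hfoci
  have hmem : x ^ 2 * (b ^ 2 - lam) + y ^ 2 * (a ^ 2 - lam)
      = (a ^ 2 - lam) * (b ^ 2 - lam) := by
    field_simp at hinc
    linear_combination hinc
  rw [hT, two_mul_div_div_one_sub_div_sq, sq_mul_sub_sq_mul_of_confocal hAB hmem,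
    show 2 * (x * (b ^ 2 - lam)) * (y * (a ^ 2 - lam))
      = (a ^ 2 - lam) * (b ^ 2 - lam) * (2 * x * y) by ring,
    mul_div_mul_left _ _ (mul_ne_zero hda hdb)]

/-- Let `T` be (minus) the slope of the conic of the confocal family with foci
`(±1,0)` (so `a² − b² = 1`) through `(x,y)`, i.e. `T = x(b²−λ)/(y(a²−λ))` with
`x²/(a²−λ) + y²/(b²−λ) = 1`.  Then `S = 2T/(1−T²)` (the doubled-angle slope)
equals the slope function `2xy/(1 + y² − x²)` of the elliptic Apollonian pencil
of circles through the foci `(±1,0)`: the tangent direction of the circle of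
the pencil through `(x,y)` annihilates `S dx + dy`. -/
theorem bipolar_slope_relation (a b lam x y T : ℝ) (hfoci : a ^ 2 - b ^ 2 = 1)
    (hda : a ^ 2 - lam ≠ 0) (hdb : b ^ 2 - lam ≠ 0) (hy : y ≠ 0)
    (hinc : x ^ 2 / (a ^ 2 - lam) + y ^ 2 / (b ^ 2 - lam) = 1)
    (hT : T = x * (b ^ 2 - lam) / (y * (a ^ 2 - lam)))
    (hT1 : T ^ 2 ≠ 1) (hden : x ^ 2 - y ^ 2 - 1 ≠ 0) :
    2 * T / (1 - T ^ 2) = 2 * x * y / (1 + y ^ 2 - x ^ 2) :=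
  bipolar_slope_relation_general a b lam x y T hfoci hda hdb hinc hT
end

section
/- The tangent lines from an exterior point p to an ellipse make equal angles with the lines joining p to the two foci (optical/isogonal property): if Q is an ellipse with foci F₁, F₂ and p is outside Q, the two tangent lines from p to Q share their angle bisectors with the lines pF₁ and pF₂. -/
/-!
Describe a line not through the origin as `{x | n · x = 1}`; it is tangent to the ellipse
`x²/A² + y²/B² = 1` exactly when `A² n₁² + B² n₂² = 1`. If `u`, `v` are directions of two
lines through `p` and `f`, `g` point from `p` to the foci, the isogonal property says that the
oriented angles `∠(u, f)` and `∠(v, g)` add up to a multiple of `π`, i.e. that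
`sin (∠(u, f) + ∠(v, g)) = 0`; by Lagrange's identity this gives the equality of squared
cosines. Up to scaling, `u` and `v` are the normals `n`, `m` rotated by a right angle, and
once `p` is eliminated through `n · p = m · p = 1`, `n × m` times the sine of the sum becomes
`|n|² - |m|² + c² (n₁² m₂² - n₂² m₁²)`, which vanishes on tangent lines since `c² = A² - B²`.
-/

def dot2 (u v : ℝ × ℝ) : ℝ := u.1 * v.1 + u.2 * v.2

def cross2 (u v : ℝ × ℝ) : ℝ := u.1 * v.2 - u.2 * v.1

def rot90 (u : ℝ × ℝ) : ℝ × ℝ := (-u.2, u.1)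

/-- `|u| |f| |v| |g| sin (∠(u, f) + ∠(v, g))`, for oriented angles. -/
def sinAddForm (u f v g : ℝ × ℝ) : ℝ := cross2 u f * dot2 v g + dot2 u f * cross2 v g

section Vectors

variable {u v f g : ℝ × ℝ}

@[simp]
theorem dot2_smul_left (t : ℝ) : dot2 (t • u) v = t * dot2 u v := by
  simp only [dot2, Prod.smul_fst, Prod.smul_snd, smul_eq_mul]; ring

@[simp]
theorem cross2_smul_left (t : ℝ) : cross2 (t • u) v = t * cross2 u v := by
  simp only [cross2, Prod.smul_fst, Prod.smul_snd, smul_eq_mul]; ring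

@[simp]
theorem dot2_rot90_left : dot2 (rot90 u) v = cross2 u v := by
  simp only [dot2, rot90, cross2]; ring

@[simp]
theorem cross2_rot90_left : cross2 (rot90 u) v = -dot2 u v := by
  simp only [dot2, rot90, cross2]; ring

theorem dot2_sq_add_cross2_sq : dot2 u v ^ 2 + cross2 u v ^ 2 = dot2 u u * dot2 v v := by
  simp only [dot2, cross2]; ring

theorem sinAddForm_smul (t s : ℝ) :
    sinAddForm (t • u) f (s • v) g = t * s * sinAddForm u f v g := by
  simp only [sinAddForm, dot2_smul_left, cross2_smul_left]; ring

theorem sinAddForm_rot90 : sinAddForm (rot90 u) f (rot90 v) g = -sinAddForm u f v g := by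
  simp only [sinAddForm, dot2_rot90_left, cross2_rot90_left]; ring

theorem sq_dot2_mul_eq_of_sinAddForm_eq_zero (h : sinAddForm u f v g = 0) :
    dot2 u f ^ 2 * dot2 v v * dot2 g g = dot2 v g ^ 2 * dot2 u u * dot2 f f := by
  have huf := dot2_sq_add_cross2_sq (u := u) (v := f)
  have hvg := dot2_sq_add_cross2_sq (u := v) (v := g)
  unfold sinAddForm at h
  linear_combination (dot2 u f * cross2 v g - cross2 u f * dot2 v g) * h
    - dot2 u f ^ 2 * hvg + dot2 v g ^ 2 * huf

theorem exists_eq_smul_rot90_of_dot2_eq_zero {n : ℝ × ℝ} (hn : n ≠ 0) (h : dot2 u n = 0) :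
    ∃ t : ℝ, u = t • rot90 n := by
  have hnn : n.1 ^ 2 + n.2 ^ 2 ≠ 0 := by
    contrapose! hn
    ext <;> simp only [Prod.fst_zero, Prod.snd_zero] <;> nlinarith
  refine ⟨cross2 n u / (n.1 ^ 2 + n.2 ^ 2), ?_⟩
  unfold dot2 at h
  ext <;> simp only [rot90, cross2, Prod.smul_fst, Prod.smul_snd, smul_eq_mul] <;> field_simp
  · linear_combination n.1 * h
  · linear_combination n.2 * h

theorem cross2_ne_zero_of_dot2_eq_one {n m p : ℝ × ℝ} (hnm : n ≠ m) (hn : dot2 n p = 1)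
    (hm : dot2 m p = 1) : cross2 n m ≠ 0 := by
  intro h
  apply hnm
  unfold dot2 at hn hm
  unfold cross2 at h
  ext
  · linear_combination m.1 * hn - n.1 * hm + p.2 * h
  · linear_combination m.2 * hn - n.2 * hm - p.1 * h

end Vectors

/-- The line `n · x = 1` is tangent to the ellipse `x²/A² + y²/B² = 1`. -/
def IsTangentLine (A B : ℝ) (n : ℝ × ℝ) : Prop := A ^ 2 * n.1 ^ 2 + B ^ 2 * n.2 ^ 2 = 1

/-- The tangent line to `x²/A² + y²/B² = 1` at `q` is `ellipseNormal A B q · x = 1`. -/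
noncomputable def ellipseNormal (A B : ℝ) (q : ℝ × ℝ) : ℝ × ℝ := (q.1 / A ^ 2, q.2 / B ^ 2)

section Ellipse

variable {A B c : ℝ} {n m p q r : ℝ × ℝ}

theorem IsTangentLine.ne_zero (hn : IsTangentLine A B n) : n ≠ 0 := by
  rintro rfl
  simp [IsTangentLine] at hn

theorem dot2_ellipseNormal (x : ℝ × ℝ) :
    dot2 (ellipseNormal A B q) x = x.1 * q.1 / A ^ 2 + x.2 * q.2 / B ^ 2 := by
  simp only [dot2, ellipseNormal]; ring

theorem isTangentLine_ellipseNormal (hA : A ≠ 0) (hB : B ≠ 0)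
    (hq : q.1 ^ 2 / A ^ 2 + q.2 ^ 2 / B ^ 2 = 1) : IsTangentLine A B (ellipseNormal A B q) := by
  simp only [IsTangentLine, ellipseNormal]
  field_simp
  field_simp at hq
  linear_combination hq

theorem ellipseNormal_injective (hA : A ≠ 0) (hB : B ≠ 0) :
    Function.Injective (ellipseNormal A B) := by
  intro q r h
  simp only [ellipseNormal, Prod.mk.injEq] at h
  ext
  · exact (div_left_inj' (pow_ne_zero 2 hA)).1 h.1
  · exact (div_left_inj' (pow_ne_zero 2 hB)).1 h.2

theorem cross2_mul_sinAddForm_foci (c : ℝ) (hnp : dot2 n p = 1) (hmp : dot2 m p = 1) :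
    cross2 n m * sinAddForm n (c - p.1, -p.2) m (-c - p.1, -p.2)
      = dot2 n n - dot2 m m + c ^ 2 * (n.1 ^ 2 * m.2 ^ 2 - n.2 ^ 2 * m.1 ^ 2) := by
  simp only [sinAddForm, cross2, dot2] at *
  -- coefficients from Cramer's rule `(n × m) p = (m₂ - n₂, n₁ - m₁)`, valid when `n · p = m · p = 1`
  linear_combination
    (-((n.1 * m.1 + n.2 * m.2) * (1 + c * m.1) + (m.1 ^ 2 + m.2 ^ 2) * (1 - c * n.1))
      - (n.1 * m.2 - n.2 * m.1) * (p.1 * m.2 - p.2 * m.1 + c * m.2)) * hnp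
    + ((n.1 ^ 2 + n.2 ^ 2) * (1 + c * m.1) + (n.1 * m.1 + n.2 * m.2) * (1 - c * n.1)
      - (n.1 * m.2 - n.2 * m.1) * (p.1 * n.2 - p.2 * n.1 - c * n.2)) * hmp

theorem sinAddForm_foci_eq_zero (hn : IsTangentLine A B n) (hm : IsTangentLine A B m)
    (hc : c ^ 2 = A ^ 2 - B ^ 2) (hnp : dot2 n p = 1) (hmp : dot2 m p = 1) (hnm : n ≠ m) :
    sinAddForm n (c - p.1, -p.2) m (-c - p.1, -p.2) = 0 := by
  refine (mul_eq_zero.1 ?_).resolve_left (cross2_ne_zero_of_dot2_eq_one hnm hnp hmp)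
  rw [cross2_mul_sinAddForm_foci c hnp hmp]
  unfold IsTangentLine at hn hm
  unfold dot2
  linear_combination (m.1 ^ 2 + m.2 ^ 2) * hn - (n.1 ^ 2 + n.2 ^ 2) * hm
    + (n.1 ^ 2 * m.2 ^ 2 - n.2 ^ 2 * m.1 ^ 2) * hc

theorem sq_dot2_foci_eq_of_isTangentLine (hn : IsTangentLine A B n) (hm : IsTangentLine A B m)
    (hc : c ^ 2 = A ^ 2 - B ^ 2) (hnq : dot2 n q = 1) (hnp : dot2 n p = 1)
    (hmr : dot2 m r = 1) (hmp : dot2 m p = 1) (hnm : n ≠ m) :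
    dot2 (q.1 - p.1, q.2 - p.2) (c - p.1, -p.2) ^ 2
        * dot2 (r.1 - p.1, r.2 - p.2) (r.1 - p.1, r.2 - p.2)
        * dot2 (-c - p.1, -p.2) (-c - p.1, -p.2)
      = dot2 (r.1 - p.1, r.2 - p.2) (-c - p.1, -p.2) ^ 2
        * dot2 (q.1 - p.1, q.2 - p.2) (q.1 - p.1, q.2 - p.2)
        * dot2 (c - p.1, -p.2) (c - p.1, -p.2) := by
  apply sq_dot2_mul_eq_of_sinAddForm_eq_zero
  obtain ⟨t, hqp⟩ := exists_eq_smul_rot90_of_dot2_eq_zero (u := (q.1 - p.1, q.2 - p.2))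
    hn.ne_zero (by unfold dot2 at *; linear_combination hnq - hnp)
  obtain ⟨s, hrp⟩ := exists_eq_smul_rot90_of_dot2_eq_zero (u := (r.1 - p.1, r.2 - p.2))
    hm.ne_zero (by unfold dot2 at *; linear_combination hmr - hmp)
  rw [hqp, hrp, sinAddForm_smul, sinAddForm_rot90, sinAddForm_foci_eq_zero hn hm hc hnp hmp hnm,
    neg_zero, mul_zero]

end Ellipse

/-- The foci are `F₁ = (c, 0)`, `F₂ = (-c, 0)` and `q`, `r` are the points of tangency; the
unoriented angles are compared through their squared cosines. -/
theorem ellipse_isogonal_property_general (A B c : ℝ) (p q r : ℝ × ℝ)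
    (hB : 0 < B) (hc : c ^ 2 = A ^ 2 - B ^ 2)
    (hq : q.1 ^ 2 / A ^ 2 + q.2 ^ 2 / B ^ 2 = 1)
    (hr : r.1 ^ 2 / A ^ 2 + r.2 ^ 2 / B ^ 2 = 1)
    (htq : p.1 * q.1 / A ^ 2 + p.2 * q.2 / B ^ 2 = 1)
    (htr : p.1 * r.1 / A ^ 2 + p.2 * r.2 / B ^ 2 = 1)
    (hqr : q ≠ r) :
    (dot2 (q.1 - p.1, q.2 - p.2) (c - p.1, -p.2)) ^ 2
        * dot2 (r.1 - p.1, r.2 - p.2) (r.1 - p.1, r.2 - p.2)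
        * dot2 (-c - p.1, -p.2) (-c - p.1, -p.2)
      = (dot2 (r.1 - p.1, r.2 - p.2) (-c - p.1, -p.2)) ^ 2
        * dot2 (q.1 - p.1, q.2 - p.2) (q.1 - p.1, q.2 - p.2)
        * dot2 (c - p.1, -p.2) (c - p.1, -p.2) ∧
    (dot2 (q.1 - p.1, q.2 - p.2) (-c - p.1, -p.2)) ^ 2
        * dot2 (r.1 - p.1, r.2 - p.2) (r.1 - p.1, r.2 - p.2)
        * dot2 (c - p.1, -p.2) (c - p.1, -p.2)
      = (dot2 (r.1 - p.1, r.2 - p.2) (c - p.1, -p.2)) ^ 2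
        * dot2 (q.1 - p.1, q.2 - p.2) (q.1 - p.1, q.2 - p.2)
        * dot2 (-c - p.1, -p.2) (-c - p.1, -p.2) := by
  have hB0 : B ≠ 0 := hB.ne'
  have hA0 : A ≠ 0 := by
    rintro rfl
    nlinarith [sq_nonneg c]
  have hn := isTangentLine_ellipseNormal hA0 hB0 hq
  have hm := isTangentLine_ellipseNormal hA0 hB0 hr
  have hnq : dot2 (ellipseNormal A B q) q = 1 := by
    rw [dot2_ellipseNormal]; linear_combination hq
  have hmr : dot2 (ellipseNormal A B r) r = 1 := by
    rw [dot2_ellipseNormal]; linear_combination hr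
  have hnp : dot2 (ellipseNormal A B q) p = 1 := (dot2_ellipseNormal p).trans htq
  have hmp : dot2 (ellipseNormal A B r) p = 1 := (dot2_ellipseNormal p).trans htr
  have hnm := (ellipseNormal_injective hA0 hB0).ne hqr
  have hswap := sq_dot2_foci_eq_of_isTangentLine (c := -c) hn hm (by rw [neg_sq, hc])
    hnq hnp hmr hmp hnm
  rw [neg_neg] at hswap
  exact ⟨sq_dot2_foci_eq_of_isTangentLine hn hm hc hnq hnp hmr hmp hnm, hswap⟩

/-- Optical/isogonal property of the ellipse: the two tangent lines from an
exterior point `p` to the ellipse `x²/A² + y²/B² = 1` (foci `F₁ = (c,0)`,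
`F₂ = (−c,0)`, `c² = A² − B²`) share their angle bisectors with the focal rays
`pF₁`, `pF₂`: the unoriented angle between the tangent line `p q` and `p F₁`
equals that between `p r` and `p F₂`, and likewise with the foci swapped
(stated via equality of squared cosines).  Here `q, r` are the tangency points. -/
theorem ellipse_isogonal_property (A B c : ℝ) (p q r : ℝ × ℝ)
    (hBA : B < A) (hB : 0 < B) (hc : c ^ 2 = A ^ 2 - B ^ 2)
    (hq : q.1 ^ 2 / A ^ 2 + q.2 ^ 2 / B ^ 2 = 1)
    (hr : r.1 ^ 2 / A ^ 2 + r.2 ^ 2 / B ^ 2 = 1)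
    (htq : p.1 * q.1 / A ^ 2 + p.2 * q.2 / B ^ 2 = 1)
    (htr : p.1 * r.1 / A ^ 2 + p.2 * r.2 / B ^ 2 = 1)
    (hqr : q ≠ r) (hext : 1 < p.1 ^ 2 / A ^ 2 + p.2 ^ 2 / B ^ 2) :
    (dot2 (q.1 - p.1, q.2 - p.2) (c - p.1, -p.2)) ^ 2
        * dot2 (r.1 - p.1, r.2 - p.2) (r.1 - p.1, r.2 - p.2)
        * dot2 (-c - p.1, -p.2) (-c - p.1, -p.2)
      = (dot2 (r.1 - p.1, r.2 - p.2) (-c - p.1, -p.2)) ^ 2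
        * dot2 (q.1 - p.1, q.2 - p.2) (q.1 - p.1, q.2 - p.2)
        * dot2 (c - p.1, -p.2) (c - p.1, -p.2) ∧
    (dot2 (q.1 - p.1, q.2 - p.2) (-c - p.1, -p.2)) ^ 2
        * dot2 (r.1 - p.1, r.2 - p.2) (r.1 - p.1, r.2 - p.2)
        * dot2 (c - p.1, -p.2) (c - p.1, -p.2)
      = (dot2 (r.1 - p.1, r.2 - p.2) (c - p.1, -p.2)) ^ 2
        * dot2 (q.1 - p.1, q.2 - p.2) (q.1 - p.1, q.2 - p.2)
        * dot2 (-c - p.1, -p.2) (-c - p.1, -p.2) :=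
  ellipse_isogonal_property_general A B c p q r hB hc hq hr htq htr hqr
end
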